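/- arXiv:2409.19707 — 11 statements merged into one kernel-verified Lean document; each statement's English description precedes it below -/
import Mathlib

section
/- Let σ : ℝ^{3×3} → ℝ^{3×3} be differentiable and isotropic, i.e. σ(Q A Qᵀ) = Q σ(A) Qᵀ for every orthogonal matrix Q ∈ O(3) and every A ∈ ℝ^{3×3}. Then for every symmetric positive definite matrix B ∈ Sym⁺⁺(3) and every skew-symmetric matrix Ω ∈ 𝔰𝔬(3), one has Ω σ(B) − σ(B) Ω = Dσ(B).[Ω B − B Ω], where Dσ(B) denotes the Fréchet derivative of σ at B. -/
open Matrix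

noncomputable section

attribute [local instance] Matrix.frobeniusNormedAddCommGroup Matrix.frobeniusNormedSpace

/-!
Conjugating `B` by the rotations `exp (u Ω)` gives a curve through `B` with velocity `Ω B - B Ω`
at `u = 0`. Isotropy says that `σ` maps this curve to the conjugates of `σ B` by the same
rotations, whose velocity is `Ω σ(B) - σ(B) Ω`; the chain rule identifies this velocity with
`Dσ(B).[Ω B - B Ω]`.
-/

open NormedSpace

section ExpConj

variable {𝕂 𝔸 : Type*} [RCLike 𝕂] [NormedRing 𝔸] [NormedAlgebra 𝕂 𝔸] [CompleteSpace 𝔸]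

theorem hasDerivAt_exp_smul_mul_mul_exp_neg_smul (Ω A : 𝔸) :
    HasDerivAt (fun u : 𝕂 => exp (u • Ω) * A * exp (u • -Ω)) (Ω * A - A * Ω) 0 := by
  have hexp : ∀ X : 𝔸, HasDerivAt (fun u : 𝕂 => exp (u • X)) X 0 := fun X => by
    simpa using hasDerivAt_exp_smul_const (𝕂 := 𝕂) X 0
  have h := ((hexp Ω).mul_const A).mul (hexp (-Ω))
  simp only [mul_one, one_mul, zero_smul, exp_zero, mul_neg, ← sub_eq_add_neg] at h
  exact h

theorem fderiv_apply_commutator_of_exp_conj_equivariant {σ : 𝔸 → 𝔸} {A Ω : 𝔸}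
    (hσ : DifferentiableAt 𝕂 σ A)
    (hσΩ : ∀ u : 𝕂, σ (exp (u • Ω) * A * exp (u • -Ω)) = exp (u • Ω) * σ A * exp (u • -Ω)) :
    fderiv 𝕂 σ A (Ω * A - A * Ω) = Ω * σ A - σ A * Ω := by
  have hcurve := hasDerivAt_exp_smul_mul_mul_exp_neg_smul (𝕂 := 𝕂) Ω A
  have hσ' : HasFDerivAt σ (fderiv 𝕂 σ A) (exp ((0 : 𝕂) • Ω) * A * exp ((0 : 𝕂) • -Ω)) := by
    simpa using hσ.hasFDerivAt
  have hchain := hσ'.comp_hasDerivAt (0 : 𝕂) hcurve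
  simp only [Function.comp_def, hσΩ] at hchain
  exact hchain.unique (hasDerivAt_exp_smul_mul_mul_exp_neg_smul Ω (σ A))

end ExpConj

theorem Matrix.exp_transpose_mul_exp_of_transpose_eq_neg {m 𝔸 : Type*} [Fintype m]
    [DecidableEq m] [NormedCommRing 𝔸] [NormedAlgebra ℚ 𝔸] [CompleteSpace 𝔸] {Ω : Matrix m m 𝔸} (hΩ : Ωᵀ = -Ω) : (exp Ω)ᵀ * exp Ω = 1 := by
  rw [← exp_transpose, hΩ, ← Matrix.exp_add_of_commute _ _ (Commute.refl Ω).neg_left,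
    neg_add_cancel, exp_zero]

attribute [local instance] Matrix.frobeniusNormedRing Matrix.frobeniusNormedAlgebra

theorem corotational_commutator_identity_general
    (σ : Matrix (Fin 3) (Fin 3) ℝ → Matrix (Fin 3) (Fin 3) ℝ)
    (hσ : Differentiable ℝ σ)
    (hiso : ∀ Q A : Matrix (Fin 3) (Fin 3) ℝ, Qᵀ * Q = 1 → σ (Q * A * Qᵀ) = Q * σ A * Qᵀ)
    (B : Matrix (Fin 3) (Fin 3) ℝ)
    (Ω : Matrix (Fin 3) (Fin 3) ℝ) (hΩ : Ωᵀ = -Ω) :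
    Ω * σ B - σ B * Ω = fderiv ℝ σ B (Ω * B - B * Ω) := by
  have hskew (u : ℝ) : (u • Ω)ᵀ = -(u • Ω) := by rw [transpose_smul, hΩ, smul_neg]
  refine (fderiv_apply_commutator_of_exp_conj_equivariant (hσ B) fun u => ?_).symm
  have hQ := hiso (exp (u • Ω)) B (exp_transpose_mul_exp_of_transpose_eq_neg (hskew u))
  rwa [← exp_transpose, hskew, ← smul_neg] at hQ

/-- For a differentiable isotropic tensor function `σ`, every symmetric
positive definite `B` and every skew-symmetric `Ω`, we have
`Ω σ(B) − σ(B) Ω = Dσ(B).[Ω B − B Ω]`. -/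
theorem corotational_commutator_identity
    (σ : Matrix (Fin 3) (Fin 3) ℝ → Matrix (Fin 3) (Fin 3) ℝ)
    (hσ : Differentiable ℝ σ)
    (hiso : ∀ Q A : Matrix (Fin 3) (Fin 3) ℝ, Qᵀ * Q = 1 → σ (Q * A * Qᵀ) = Q * σ A * Qᵀ)
    (B : Matrix (Fin 3) (Fin 3) ℝ) (hB : B.PosDef)
    (Ω : Matrix (Fin 3) (Fin 3) ℝ) (hΩ : Ωᵀ = -Ω) :
    Ω * σ B - σ B * Ω = fderiv ℝ σ B (Ω * B - B * Ω) :=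
  corotational_commutator_identity_general σ hσ hiso B Ω hΩ
end
end

section
/- Chain rule for corotational rates: let σ : ℝ^{3×3} → ℝ^{3×3} be differentiable and isotropic, i.e. σ(Q A Qᵀ) = Q σ(A) Qᵀ for every orthogonal Q and every A. Let t ↦ B(t) be a differentiable curve of symmetric positive definite 3×3 matrices and t ↦ Ω(t) a curve of skew-symmetric 3×3 matrices, and define the corotational derivative D°[X](t) := X'(t) − Ω(t) X(t) + X(t) Ω(t). Then D°[σ ∘ B](t) = Dσ(B(t)).(D°[B](t)) for all t, where Dσ(B(t)) is the Fréchet derivative of σ at B(t). -/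
/-! Differentiating the isotropy relation `σ (Q A Qᵀ) = Q σ(A) Qᵀ` along the rotations
`Q = exp (s W)` at `s = 0` gives `Dσ(A) ⁅W, A⁆ = ⁅W, σ A⁆` for every skew `W`. The corotational
correction terms are exactly such commutators, so the ordinary chain rule for `σ ∘ B` carries
them along. -/

open Matrix

noncomputable section

attribute [local instance] Matrix.frobeniusNormedAddCommGroup Matrix.frobeniusNormedSpace

attribute [local instance] Matrix.frobeniusNormedRing Matrix.frobeniusNormedAlgebra

open NormedSpace

def IsIsotropic {n : Type*} [Fintype n] [DecidableEq n] (σ : Matrix n n ℝ → Matrix n n ℝ) :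
    Prop :=
  ∀ Q A : Matrix n n ℝ, Qᵀ * Q = 1 → σ (Q * A * Qᵀ) = Q * σ A * Qᵀ

theorem hasDerivAt_exp_smul_mul_mul_exp_smul_neg {𝔸 : Type*} [NormedRing 𝔸]
    [NormedAlgebra ℝ 𝔸] [CompleteSpace 𝔸] (w a : 𝔸) :
    HasDerivAt (fun s : ℝ => exp (s • w) * a * exp (s • -w)) ⁅w, a⁆ 0 := by
  have hexp : ∀ v : 𝔸, HasDerivAt (fun s : ℝ => exp (s • v)) v 0 := fun v => by
    simpa using hasDerivAt_exp_smul_const (𝕂 := ℝ) v 0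
  convert ((hexp w).mul_const a).fun_mul (hexp (-w)) using 1
  simp [Ring.lie_def, sub_eq_add_neg]

section Skew

variable {n : Type*} [Fintype n] [DecidableEq n] {W : Matrix n n ℝ}

theorem transpose_exp_smul_of_transpose_eq_neg (hW : Wᵀ = -W) (s : ℝ) :
    (exp (s • W))ᵀ = exp (s • -W) := by
  rw [← Matrix.exp_transpose, transpose_smul, hW]

theorem transpose_exp_smul_mul_self_of_transpose_eq_neg (hW : Wᵀ = -W) (s : ℝ) :
    (exp (s • W))ᵀ * exp (s • W) = 1 := by
  rw [transpose_exp_smul_of_transpose_eq_neg hW,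
    ← Matrix.exp_add_of_commute _ _ (by simp), smul_neg, neg_add_cancel, exp_zero]

theorem IsIsotropic.fderiv_lie {σ : Matrix n n ℝ → Matrix n n ℝ} (hiso : IsIsotropic σ)
    {A : Matrix n n ℝ} (hσ : DifferentiableAt ℝ σ A) (hW : Wᵀ = -W) :
    fderiv ℝ σ A ⁅W, A⁆ = ⁅W, σ A⁆ := by
  have hσconj : HasDerivAt (fun s : ℝ => σ (exp (s • W) * A * exp (s • -W)))
      (fderiv ℝ σ A ⁅W, A⁆) 0 :=
    hσ.hasFDerivAt.comp_hasDerivAt_of_eq 0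
      (hasDerivAt_exp_smul_mul_mul_exp_smul_neg W A) (by simp)
  have hrot : (fun s : ℝ => σ (exp (s • W) * A * exp (s • -W)))
      = fun s => exp (s • W) * σ A * exp (s • -W) := by
    funext s
    rw [← transpose_exp_smul_of_transpose_eq_neg hW,
      hiso _ _ (transpose_exp_smul_mul_self_of_transpose_eq_neg hW s)]
  rw [hrot] at hσconj
  exact hσconj.unique (hasDerivAt_exp_smul_mul_mul_exp_smul_neg W (σ A))

end Skew

theorem corotational_chain_rule_general
    (σ : Matrix (Fin 3) (Fin 3) ℝ → Matrix (Fin 3) (Fin 3) ℝ)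
    (hσ : Differentiable ℝ σ)
    (hiso : ∀ Q A : Matrix (Fin 3) (Fin 3) ℝ, Qᵀ * Q = 1 → σ (Q * A * Qᵀ) = Q * σ A * Qᵀ)
    (B : ℝ → Matrix (Fin 3) (Fin 3) ℝ) (hB : Differentiable ℝ B)
    (Ω : ℝ → Matrix (Fin 3) (Fin 3) ℝ) (hΩ : ∀ t, (Ω t)ᵀ = -(Ω t)) (t : ℝ) :
    deriv (fun s => σ (B s)) t - Ω t * σ (B t) + σ (B t) * Ω t
      = fderiv ℝ σ (B t) (deriv B t - Ω t * B t + B t * Ω t) := by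
  have hchain : deriv (fun s => σ (B s)) t = fderiv ℝ σ (B t) (deriv B t) :=
    fderiv_comp_deriv t (hσ (B t)) (hB t)
  have hlie := IsIsotropic.fderiv_lie (A := B t) hiso (hσ (B t)) (hΩ t)
  calc deriv (fun s => σ (B s)) t - Ω t * σ (B t) + σ (B t) * Ω t
      = deriv (fun s => σ (B s)) t - ⁅Ω t, σ (B t)⁆ := by rw [Ring.lie_def]; abel
    _ = fderiv ℝ σ (B t) (deriv B t - ⁅Ω t, B t⁆) := by rw [map_sub, hlie, hchain]
    _ = fderiv ℝ σ (B t) (deriv B t - Ω t * B t + B t * Ω t) := by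
      rw [Ring.lie_def, sub_sub_eq_add_sub, sub_add_eq_add_sub]

/-- Chain rule for corotational rates: for a differentiable isotropic
tensor function `σ`, a differentiable curve `B` of symmetric positive definite matrices
and a curve `Ω` of skew-symmetric matrices,
`D°[σ ∘ B](t) = Dσ(B(t)).(D°[B](t))`. -/
theorem corotational_chain_rule
    (σ : Matrix (Fin 3) (Fin 3) ℝ → Matrix (Fin 3) (Fin 3) ℝ)
    (hσ : Differentiable ℝ σ)
    (hiso : ∀ Q A : Matrix (Fin 3) (Fin 3) ℝ, Qᵀ * Q = 1 → σ (Q * A * Qᵀ) = Q * σ A * Qᵀ)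
    (B : ℝ → Matrix (Fin 3) (Fin 3) ℝ) (hB : Differentiable ℝ B)
    (hBpos : ∀ t, (B t).PosDef)
    (Ω : ℝ → Matrix (Fin 3) (Fin 3) ℝ) (hΩ : ∀ t, (Ω t)ᵀ = -(Ω t)) (t : ℝ) :
    deriv (fun s => σ (B s)) t - Ω t * σ (B t) + σ (B t) * Ω t
      = fderiv ℝ σ (B t) (deriv B t - Ω t * B t + B t * Ω t) :=
  corotational_chain_rule_general σ hσ hiso B hB Ω hΩ t
end
end

section
/- Conservation of isotropic invariants under vanishing corotational rate: let I : ℝ^{3×3} → ℝ be differentiable with I(Q A Qᵀ) = I(A) for every orthogonal Q ∈ O(3) and every A ∈ ℝ^{3×3}. Let t ↦ σ(t) be a differentiable curve of symmetric 3×3 matrices and t ↦ Ω(t) a curve of skew-symmetric 3×3 matrices such that σ'(t) = Ω(t) σ(t) − σ(t) Ω(t) for all t (i.e. the corotational derivative of σ vanishes). Then t ↦ I(σ(t)) is constant: its derivative is identically zero. -/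
/-!
For skew `W`, `s ↦ exp (s • W)` is a curve of orthogonal matrices through `1` with velocity `W`,
so invariance makes `I` constant along `s ↦ exp (s • W) * A * (exp (s • W))ᵀ`, whose velocity
at `s = 0` is the commutator `W * A - A * W`. Hence the differential of `I` at `A` kills every
such commutator, and by the chain rule `(I ∘ σ)' (t)` is its value on `Ω t * σ t - σ t * Ω t`.
-/

open Matrix NormedSpace

attribute [local instance] Matrix.frobeniusNormedRing Matrix.frobeniusNormedAlgebra

section OrthogonalConjugation

variable {n : Type*} [Fintype n] [DecidableEq n]

theorem transpose_mul_self_exp_of_transpose_eq_neg {W : Matrix n n ℝ} (hW : Wᵀ = -W) :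
    (exp W)ᵀ * exp W = 1 := by
  have hskew : W ∈ skewAdjoint (Matrix n n ℝ) := by
    rw [skewAdjoint.mem_iff, star_eq_conjTranspose, conjTranspose_eq_transpose_of_trivial, hW]
  have h := Unitary.star_mul_self_of_mem (exp_mem_unitary_of_mem_skewAdjoint hskew)
  rwa [star_eq_conjTranspose, conjTranspose_eq_transpose_of_trivial] at h

theorem hasDerivAt_exp_smul_mul_mul_transpose (W A : Matrix n n ℝ) :
    HasDerivAt (fun s : ℝ => exp (s • W) * A * (exp (s • W))ᵀ) (W * A + A * Wᵀ) 0 := by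
  have hexp := hasDerivAt_exp_smul_const' (𝕂 := ℝ) W 0
  have hexpT := hasDerivAt_exp_smul_const' (𝕂 := ℝ) Wᵀ 0
  simp only [zero_smul, exp_zero, mul_one] at hexp hexpT
  have h := (hexp.mul_const A).mul hexpT
  simp only [zero_smul, exp_zero, one_mul, mul_one] at h
  simp_rw [← exp_transpose, transpose_smul]
  exact h

theorem fderiv_apply_commutator_eq_zero_of_orthogonal_invariant {I : Matrix n n ℝ → ℝ}
    (hinv : ∀ Q A : Matrix n n ℝ, Qᵀ * Q = 1 → I (Q * A * Qᵀ) = I A)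
    {A : Matrix n n ℝ} (hI : DifferentiableAt ℝ I A) {W : Matrix n n ℝ} (hW : Wᵀ = -W) :
    fderiv ℝ I A (W * A - A * W) = 0 := by
  have hconj : HasDerivAt (fun s : ℝ => I (exp (s • W) * A * (exp (s • W))ᵀ))
      (fderiv ℝ I A (W * A + A * Wᵀ)) 0 :=
    hI.hasFDerivAt.comp_hasDerivAt_of_eq 0 (hasDerivAt_exp_smul_mul_mul_transpose W A) (by simp)
  have hconst : (fun s : ℝ => I (exp (s • W) * A * (exp (s • W))ᵀ)) = fun _ => I A := by
    funext s
    refine hinv _ A (transpose_mul_self_exp_of_transpose_eq_neg ?_)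
    rw [transpose_smul, hW, smul_neg]
  rw [hconst, hW, mul_neg, ← sub_eq_add_neg] at hconj
  exact ((hasDerivAt_const 0 (I A)).unique hconj).symm

end OrthogonalConjugation

theorem isotropic_invariant_conserved_general
    (I : Matrix (Fin 3) (Fin 3) ℝ → ℝ) (hI : Differentiable ℝ I)
    (hinv : ∀ Q A : Matrix (Fin 3) (Fin 3) ℝ, Qᵀ * Q = 1 → I (Q * A * Qᵀ) = I A)
    (σ : ℝ → Matrix (Fin 3) (Fin 3) ℝ)
    (Ω : ℝ → Matrix (Fin 3) (Fin 3) ℝ) (hΩ : ∀ t, (Ω t)ᵀ = -(Ω t))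
    (hσ : ∀ t, HasDerivAt σ (Ω t * σ t - σ t * Ω t) t) :
    ∀ t, deriv (fun s => I (σ s)) t = 0 := by
  intro t
  have hchain : HasDerivAt (fun s => I (σ s)) (fderiv ℝ I (σ t) (Ω t * σ t - σ t * Ω t)) t :=
    (hI (σ t)).hasFDerivAt.comp_hasDerivAt t (hσ t)
  rw [hchain.deriv]
  exact fderiv_apply_commutator_eq_zero_of_orthogonal_invariant hinv (hI (σ t)) (hΩ t)

/-- If the corotational derivative of a symmetric matrix curve `σ`
vanishes, i.e. `σ'(t) = Ω(t) σ(t) − σ(t) Ω(t)`, then any differentiable isotropic scalar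
invariant `I` is conserved: `(d/dt) I(σ(t)) = 0`. -/
theorem isotropic_invariant_conserved
    (I : Matrix (Fin 3) (Fin 3) ℝ → ℝ) (hI : Differentiable ℝ I)
    (hinv : ∀ Q A : Matrix (Fin 3) (Fin 3) ℝ, Qᵀ * Q = 1 → I (Q * A * Qᵀ) = I A)
    (σ : ℝ → Matrix (Fin 3) (Fin 3) ℝ) (hsym : ∀ t, (σ t)ᵀ = σ t)
    (Ω : ℝ → Matrix (Fin 3) (Fin 3) ℝ) (hΩ : ∀ t, (Ω t)ᵀ = -(Ω t))
    (hσ : ∀ t, HasDerivAt σ (Ω t * σ t - σ t * Ω t) t) :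
    ∀ t, deriv (fun s => I (σ s)) t = 0 :=
  isotropic_invariant_conserved_general I hI hinv σ Ω hΩ hσ
end

section
/- Positivity of the Green-Naghdi rate of B: let V be a real symmetric positive definite 3×3 matrix and let c > 0 be such that V − c·𝟙 is positive semidefinite. Then for every symmetric 3×3 matrix D one has ⟨2 V D V, D⟩ ≥ 2 c² ‖D‖²; in particular ⟨2 V D V, D⟩ > 0 whenever D ≠ 0. -/
/-!
Write `V = S + c • 1` with `S` positive semidefinite. For symmetric `D`,
`tr (V D V D) = tr (S D S D) + 2 c tr (S D²) + c² tr (D²)`, and the first two terms are traces of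
products of positive semidefinite matrices (`S` against `D S D` and against `D²`), hence
nonnegative.
-/

open Matrix

namespace Matrix

variable {n : Type*} [Fintype n]

open scoped ComplexOrder MatrixOrder in
theorem PosSemidef.trace_mul_nonneg {𝕜 : Type*} [RCLike 𝕜] {A B : Matrix n n 𝕜}
    (hA : A.PosSemidef) (hB : B.PosSemidef) : 0 ≤ (A * B).trace := by
  classical
  obtain ⟨C, rfl⟩ := CStarAlgebra.nonneg_iff_eq_star_mul_self.mp hB.nonneg
  rw [star_eq_conjTranspose, ← Matrix.mul_assoc, trace_mul_comm, ← Matrix.mul_assoc]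
  exact (hA.mul_mul_conjTranspose_same C).trace_nonneg

theorem trace_mul_transpose_self_pos {D : Matrix n n ℝ} (hD : D ≠ 0) : 0 < (D * Dᵀ).trace := by
  rw [← conjTranspose_eq_transpose_of_trivial]
  exact (posSemidef_self_mul_conjTranspose D).trace_nonneg.lt_of_ne'
    (mt trace_mul_conjTranspose_self_eq_zero_iff.mp hD)

theorem trace_add_smul_one_mul_mul_mul [DecidableEq n] {R : Type*} [CommRing R]
    (S D : Matrix n n R) (c : R) :
    ((S + c • 1) * D * (S + c • 1) * D).trace =
      (S * D * S * D).trace + 2 * c * (S * D * D).trace + c ^ 2 * (D * D).trace := by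
  have hcycle : (D * S * D).trace = (S * D * D).trace := by
    rw [trace_mul_comm, ← Matrix.mul_assoc, trace_mul_comm, Matrix.mul_assoc]
  simp only [add_mul, mul_add, smul_mul_assoc, mul_smul_comm, Matrix.one_mul, Matrix.mul_one,
    trace_add, trace_smul, smul_eq_mul, hcycle]
  ring

theorem sq_mul_trace_mul_self_le_trace_mul_mul_mul [DecidableEq n] {V D : Matrix n n ℝ} {c : ℝ}
    (hc : 0 ≤ c) (hVc : (V - c • 1).PosSemidef) (hD : Dᵀ = D) :
    c ^ 2 * (D * D).trace ≤ (V * D * V * D).trace := by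
  have hDh : Dᴴ = D := by rw [conjTranspose_eq_transpose_of_trivial, hD]
  have hSDSD : 0 ≤ ((V - c • 1) * D * (V - c • 1) * D).trace := by
    simpa only [hDh, Matrix.mul_assoc] using
      hVc.trace_mul_nonneg (hVc.conjTranspose_mul_mul_same D)
  have hSDD : 0 ≤ ((V - c • 1) * D * D).trace := by
    simpa only [hDh, Matrix.mul_assoc] using
      hVc.trace_mul_nonneg (posSemidef_conjTranspose_mul_self D)
  have hexpand := trace_add_smul_one_mul_mul_mul (V - c • 1) D c
  rw [sub_add_cancel] at hexpand
  linarith [mul_nonneg (mul_nonneg zero_le_two hc) hSDD]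

end Matrix

theorem green_naghdi_positive_general
    (V : Matrix (Fin 3) (Fin 3) ℝ) (c : ℝ) (hc : 0 < c)
    (hVc : (V - c • (1 : Matrix (Fin 3) (Fin 3) ℝ)).PosSemidef) :
    ∀ D : Matrix (Fin 3) (Fin 3) ℝ, Dᵀ = D →
      2 * c ^ 2 * ((D * Dᵀ).trace) ≤ (((2 : ℝ) • (V * D * V)) * Dᵀ).trace
        ∧ (D ≠ 0 → 0 < (((2 : ℝ) • (V * D * V)) * Dᵀ).trace) := by
  intro D hD
  have hbound := sq_mul_trace_mul_self_le_trace_mul_mul_mul hc.le hVc hD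
  rw [smul_mul, trace_smul, smul_eq_mul, hD]
  refine ⟨by linarith, fun hD0 => ?_⟩
  have hnorm := trace_mul_transpose_self_pos hD0
  rw [hD] at hnorm
  nlinarith [mul_pos (pow_pos hc 2) hnorm]

/-- Positivity of the Green-Naghdi rate of `B`: if `V` is symmetric
positive definite and `V − c·𝟙` is positive semidefinite for some `c > 0`, then for every
symmetric `D` one has `⟨2 V D V, D⟩ ≥ 2 c² ‖D‖²`, and `⟨2 V D V, D⟩ > 0` if `D ≠ 0`. -/
theorem green_naghdi_positive
    (V : Matrix (Fin 3) (Fin 3) ℝ) (hV : V.PosDef) (c : ℝ) (hc : 0 < c)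
    (hVc : (V - c • (1 : Matrix (Fin 3) (Fin 3) ℝ)).PosSemidef) :
    ∀ D : Matrix (Fin 3) (Fin 3) ℝ, Dᵀ = D →
      2 * c ^ 2 * ((D * Dᵀ).trace) ≤ (((2 : ℝ) • (V * D * V)) * Dᵀ).trace
        ∧ (D ≠ 0 → 0 < (((2 : ℝ) • (V * D * V)) * Dᵀ).trace) :=
  green_naghdi_positive_general V c hc hVc
end

section
/- Positivity of the Zaremba-Jaumann rate of the Seth-Hill strain with exponent k: let B be a real symmetric positive definite 3×3 matrix, let k be a natural number, and let D be a nonzero symmetric 3×3 matrix. Then ⟨ Σ_{i=0}^{k} ( B^{i+1} D B^{k−i} + B^{i} D B^{k−i+1} ), D ⟩ > 0. -/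
/-!
Writing a positive semidefinite `P` as `yᴴ * y`, the trace `tr (P * A * Q * Aᴴ)` becomes the trace
of the positive semidefinite matrix `y * (A * Q * Aᴴ) * yᴴ`, so every summand is nonnegative.
The summand `i = k` contains `tr (B ^ (k + 1) * D * Dᵀ)`, which is positive because `B ^ (k + 1)`
is positive definite (so `y` is invertible) and `D ≠ 0`.
-/

open Matrix

namespace Matrix

open scoped ComplexOrder MatrixOrder

variable {m n 𝕜 : Type*} [Fintype m] [Fintype n] [RCLike 𝕜] {P M : Matrix n n 𝕜}

lemma PosSemidef.trace_mul_nonneg_s8 (hP : P.PosSemidef) (hM : M.PosSemidef) :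
    0 ≤ (P * M).trace := by
  classical
  obtain ⟨y, rfl⟩ := CStarAlgebra.nonneg_iff_eq_star_mul_self.mp hP.nonneg
  rw [star_eq_conjTranspose, mul_assoc, trace_mul_comm]
  exact (hM.mul_mul_conjTranspose_same y).trace_nonneg

lemma PosDef.trace_mul_pos (hP : P.PosDef) (hM : M.PosSemidef) (hM0 : M ≠ 0) :
    0 < (P * M).trace := by
  classical
  obtain ⟨y, rfl⟩ := CStarAlgebra.nonneg_iff_eq_star_mul_self.mp hP.posSemidef.nonneg
  have hy : IsUnit y := by
    have hdet := hP.isUnit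
    rw [isUnit_iff_isUnit_det, det_mul] at hdet
    exact (isUnit_iff_isUnit_det y).mpr (isUnit_of_mul_isUnit_right hdet)
  rw [star_eq_conjTranspose, mul_assoc, trace_mul_comm]
  have hyM := hM.mul_mul_conjTranspose_same y
  refine hyM.trace_nonneg.lt_of_ne' fun h => hM0 ?_
  rwa [hyM.trace_eq_zero_iff, ← star_eq_conjTranspose, hy.star.mul_left_eq_zero,
    hy.mul_right_eq_zero] at h

lemma PosSemidef.trace_mul_mul_mul_conjTranspose_nonneg {Q : Matrix m m 𝕜} (hP : P.PosSemidef)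
    (hQ : Q.PosSemidef) (A : Matrix n m 𝕜) : 0 ≤ (P * A * Q * Aᴴ).trace := by
  rw [Matrix.mul_assoc, Matrix.mul_assoc, ← Matrix.mul_assoc A]
  exact hP.trace_mul_nonneg_s8 (hQ.mul_mul_conjTranspose_same A)

lemma PosDef.trace_mul_mul_conjTranspose_pos (hP : P.PosDef) {A : Matrix n m 𝕜} (hA : A ≠ 0) :
    0 < (P * A * Aᴴ).trace := by
  rw [Matrix.mul_assoc]
  refine hP.trace_mul_pos (posSemidef_self_mul_conjTranspose A) fun h => hA ?_
  rw [← trace_mul_conjTranspose_self_eq_zero_iff, h, trace_zero]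

protected lemma PosDef.pow [DecidableEq n] (hP : P.PosDef) (k : ℕ) : (P ^ k).PosDef :=
  (hP.posSemidef.pow k).posDef_iff_isUnit.mpr (hP.isUnit.pow k)

end Matrix

theorem seth_hill_positive_general
    (B : Matrix (Fin 3) (Fin 3) ℝ) (hB : B.PosDef) (k : ℕ)
    (D : Matrix (Fin 3) (Fin 3) ℝ) (hD0 : D ≠ 0) :
    0 < ((∑ i ∈ Finset.range (k + 1),
        (B ^ (i + 1) * D * B ^ (k - i) + B ^ i * D * B ^ (k - i + 1))) * Dᵀ).trace := by
  have summand_nonneg (i j : ℕ) : 0 ≤ (B ^ i * D * B ^ j * Dᵀ).trace :=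
    (hB.posSemidef.pow i).trace_mul_mul_mul_conjTranspose_nonneg (hB.posSemidef.pow j) D
  have top_pos : 0 < (B ^ (k + 1) * D * B ^ (k - k) * Dᵀ).trace := by
    rw [Nat.sub_self, pow_zero, mul_one]
    exact (hB.pow (k + 1)).trace_mul_mul_conjTranspose_pos hD0
  rw [Finset.sum_mul, trace_sum]
  refine Finset.sum_pos' (fun i _ => ?_) ⟨k, Finset.self_mem_range_succ k, ?_⟩ <;>
    rw [add_mul, trace_add]
  · exact add_nonneg (summand_nonneg _ _) (summand_nonneg _ _)
  · exact add_pos_of_pos_of_nonneg top_pos (summand_nonneg _ _)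

/-- Positivity of the Zaremba-Jaumann rate of the Seth-Hill strain with
exponent `k`: for `B` symmetric positive definite and `D ≠ 0` symmetric,
`⟨ Σ_{i=0}^{k} ( B^{i+1} D B^{k−i} + B^{i} D B^{k−i+1} ), D ⟩ > 0`. -/
theorem seth_hill_positive
    (B : Matrix (Fin 3) (Fin 3) ℝ) (hB : B.PosDef) (k : ℕ)
    (D : Matrix (Fin 3) (Fin 3) ℝ) (hD : Dᵀ = D) (hD0 : D ≠ 0) :
    0 < ((∑ i ∈ Finset.range (k + 1),
        (B ^ (i + 1) * D * B ^ (k - i) + B ^ i * D * B ^ (k - i + 1))) * Dᵀ).trace :=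
  seth_hill_positive_general B hB k D hD0
end

section
/- Major symmetry (self-adjointness) of the stiffness tensor 𝔸°(B): let B be a real symmetric positive definite 3×3 matrix, ν₁, ν₂, ν₃ ∈ ℝ, and define for symmetric D the matrix 𝔸°(B).D := D B + B D + (ν₁/2)(B [B,D] − [B,D] B) + (ν₂/2)(B² [B,D] − [B,D] B²) + (ν₃/2)(B² [B,D] B − B [B,D] B²), where [B,D] := B D − D B. Then for all symmetric 3×3 matrices D₁, D₂ one has ⟨𝔸°(B).D₁, D₂⟩ = ⟨𝔸°(B).D₂, D₁⟩. -/
open Matrix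

/-- The stiffness map `𝔸°(B)` acting on a symmetric matrix `D`:
`𝔸°(B).D = D B + B D + (ν₁/2)(B [B,D] − [B,D] B) + (ν₂/2)(B² [B,D] − [B,D] B²)
  + (ν₃/2)(B² [B,D] B − B [B,D] B²)` with `[B,D] = B D − D B`. -/
noncomputable def Astiff (B : Matrix (Fin 3) (Fin 3) ℝ) (ν₁ ν₂ ν₃ : ℝ)
    (D : Matrix (Fin 3) (Fin 3) ℝ) : Matrix (Fin 3) (Fin 3) ℝ :=
  D * B + B * D
    + (ν₁ / 2) • (B * (B * D - D * B) - (B * D - D * B) * B)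
    + (ν₂ / 2) • (B ^ 2 * (B * D - D * B) - (B * D - D * B) * B ^ 2)
    + (ν₃ / 2) • (B ^ 2 * (B * D - D * B) * B - B * (B * D - D * B) * B ^ 2)

/-- Major symmetry (self-adjointness) of the stiffness tensor `𝔸°(B)`:
`⟨𝔸°(B).D₁, D₂⟩ = ⟨𝔸°(B).D₂, D₁⟩` for all symmetric `D₁, D₂`. -/
theorem Astiff_major_symmetric
    (B : Matrix (Fin 3) (Fin 3) ℝ) (hB : B.PosDef) (ν₁ ν₂ ν₃ : ℝ)
    (D₁ D₂ : Matrix (Fin 3) (Fin 3) ℝ) (hD₁ : D₁ᵀ = D₁) (hD₂ : D₂ᵀ = D₂) :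
    ((Astiff B ν₁ ν₂ ν₃ D₁) * D₂ᵀ).trace = ((Astiff B ν₁ ν₂ ν₃ D₂) * D₁ᵀ).trace := by
  rw [hD₁, hD₂]
  simp only [Astiff, pow_two, add_mul, sub_mul, mul_sub, mul_add, smul_mul_assoc,
    trace_add, trace_sub, trace_smul, mul_assoc]
  have ha : (D₁ * (B * D₂)).trace = (B * (D₂ * D₁)).trace := by
    rw [trace_mul_comm]; simp only [mul_assoc]
  have hb : (B * (D₁ * D₂)).trace = (D₂ * (B * D₁)).trace := by
    rw [trace_mul_comm]; simp only [mul_assoc]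
    rw [trace_mul_comm]; simp only [mul_assoc]
  have hc : (B * (B * (D₁ * D₂))).trace = (D₂ * (B * (B * D₁))).trace := by
    rw [trace_mul_comm]; simp only [mul_assoc]
    rw [trace_mul_comm]; simp only [mul_assoc]
    rw [trace_mul_comm]; simp only [mul_assoc]
  have hd : (B * (D₁ * (B * D₂))).trace = (B * (D₂ * (B * D₁))).trace := by
    rw [trace_mul_comm]; simp only [mul_assoc]
    rw [trace_mul_comm]; simp only [mul_assoc]
  have he : (D₁ * (B * (B * D₂))).trace = (B * (B * (D₂ * D₁))).trace := by
    rw [trace_mul_comm]; simp only [mul_assoc]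
  have hf : (B * (B * (B * (D₁ * D₂)))).trace = (D₂ * (B * (B * (B * D₁)))).trace := by
    rw [trace_mul_comm]; simp only [mul_assoc]
    rw [trace_mul_comm]; simp only [mul_assoc]
    rw [trace_mul_comm]; simp only [mul_assoc]
    rw [trace_mul_comm]; simp only [mul_assoc]
  have hg : (B * (B * (D₁ * (B * D₂)))).trace = (B * (D₂ * (B * (B * D₁)))).trace := by
    rw [trace_mul_comm]; simp only [mul_assoc]
    rw [trace_mul_comm]; simp only [mul_assoc]
    rw [trace_mul_comm]; simp only [mul_assoc]
  have hh : (B * (D₁ * (B * (B * D₂)))).trace = (B * (B * (D₂ * (B * D₁)))).trace := by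
    rw [trace_mul_comm]; simp only [mul_assoc]
    rw [trace_mul_comm]; simp only [mul_assoc]
  have hi : (D₁ * (B * (B * (B * D₂)))).trace = (B * (B * (B * (D₂ * D₁)))).trace := by
    rw [trace_mul_comm]; simp only [mul_assoc]
  have hj : (B * (B * (B * (D₁ * (B * D₂))))).trace
      = (B * (D₂ * (B * (B * (B * D₁))))).trace := by
    rw [trace_mul_comm]; simp only [mul_assoc]
    rw [trace_mul_comm]; simp only [mul_assoc]
    rw [trace_mul_comm]; simp only [mul_assoc]
    rw [trace_mul_comm]; simp only [mul_assoc]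
  have hk : (B * (B * (D₁ * (B * (B * D₂))))).trace
      = (B * (B * (D₂ * (B * (B * D₁))))).trace := by
    rw [trace_mul_comm]; simp only [mul_assoc]
    rw [trace_mul_comm]; simp only [mul_assoc]
    rw [trace_mul_comm]; simp only [mul_assoc]
  have hl : (B * (D₁ * (B * (B * (B * D₂))))).trace
      = (B * (B * (B * (D₂ * (B * D₁))))).trace := by
    rw [trace_mul_comm]; simp only [mul_assoc]
    rw [trace_mul_comm]; simp only [mul_assoc]
  rw [ha, hb, hc, hd, he, hf, hg, hh, hi, hj, hk, hl]
  ring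
end

section
/- Quadratic form of the stiffness tensor 𝔸°(B): let B be a real symmetric positive definite 3×3 matrix, ν₁, ν₂, ν₃ ∈ ℝ, and define 𝔸°(B).D := D B + B D + (ν₁/2)(B [B,D] − [B,D] B) + (ν₂/2)(B² [B,D] − [B,D] B²) + (ν₃/2)(B² [B,D] B − B [B,D] B²) with [B,D] := B D − D B. Then for every symmetric 3×3 matrix D, ⟨𝔸°(B).D, D⟩ = 2 ⟨B D, D⟩ + (ν₁/2) ‖[B,D]‖² + ν₂ ⟨B² D, [B,D]⟩ + ν₃ ⟨B² D B, [B,D]⟩. -/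
open Matrix

/-- Quadratic form of the stiffness tensor:
`⟨𝔸°(B).D, D⟩ = 2⟨B D, D⟩ + (ν₁/2)‖[B,D]‖² + ν₂⟨B² D, [B,D]⟩ + ν₃⟨B² D B, [B,D]⟩`. -/
theorem Astiff_quadratic_form
    (B : Matrix (Fin 3) (Fin 3) ℝ) (hB : B.PosDef) (ν₁ ν₂ ν₃ : ℝ)
    (D : Matrix (Fin 3) (Fin 3) ℝ) (hD : Dᵀ = D) :
    ((Astiff B ν₁ ν₂ ν₃ D) * Dᵀ).trace
      = 2 * ((B * D) * Dᵀ).trace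
        + (ν₁ / 2) * ((B * D - D * B) * (B * D - D * B)ᵀ).trace
        + ν₂ * ((B ^ 2 * D) * (B * D - D * B)ᵀ).trace
        + ν₃ * ((B ^ 2 * D * B) * (B * D - D * B)ᵀ).trace := by
  have hBt : Bᵀ = B := by have := hB.isHermitian; simpa [Matrix.IsHermitian] using this
  simp only [Astiff, sq, Matrix.transpose_sub, Matrix.transpose_mul, hD, hBt,
    Matrix.mul_sub, Matrix.sub_mul, Matrix.add_mul, Matrix.smul_mul,
    Matrix.trace_add, Matrix.trace_sub, Matrix.trace_smul, Matrix.mul_assoc, smul_eq_mul]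
  have c1 : (D * (B * D)).trace = (B * (D * D)).trace := by
    simpa [Matrix.mul_assoc] using Matrix.trace_mul_comm D (B * D)
  have c2 : (D * (B * (B * D))).trace = (B * (B * (D * D))).trace := by
    simpa [Matrix.mul_assoc] using Matrix.trace_mul_comm D (B * (B * D))
  have c3 : (B * (D * (D * B))).trace = (B * (B * (D * D))).trace := by
    simpa [Matrix.mul_assoc] using Matrix.trace_mul_comm (B * (D * D)) B
  have c4 : (D * (B * (D * B))).trace = (B * (D * (B * D))).trace := by
    simpa [Matrix.mul_assoc] using Matrix.trace_mul_comm D (B * (D * B))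
  have c5 : (B * (D * (B * (B * D)))).trace = (B * (B * (D * (B * D)))).trace := by
    simpa [Matrix.mul_assoc] using Matrix.trace_mul_comm (B * D) (B * (B * D))
  have c6 : (D * (B * (B * (B * D)))).trace = (B * (B * (B * (D * D)))).trace := by
    simpa [Matrix.mul_assoc] using Matrix.trace_mul_comm D (B * (B * (B * D)))
  have c7 : (B * (B * (D * (D * B)))).trace = (B * (B * (B * (D * D)))).trace := by
    simpa [Matrix.mul_assoc] using Matrix.trace_mul_comm (B * (B * (D * D))) B
  have c8 : (B * (B * (B * (D * (B * D))))).trace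
      = (B * (B * (D * (B * (D * B))))).trace := by
    simpa [Matrix.mul_assoc] using Matrix.trace_mul_comm B (B * (B * (D * (B * D))))
  have c9 : (B * (D * (B * (B * (B * D))))).trace
      = (B * (B * (D * (B * (D * B))))).trace := by
    rw [← c8]
    simpa [Matrix.mul_assoc] using Matrix.trace_mul_comm (B * D) (B * (B * (B * D)))
  rw [c1, c2, c3, c4, c5, c6, c7, c8, c9]
  ring
end

section
/- Let B be a real symmetric positive definite 3×3 matrix and D a real symmetric 3×3 matrix. Then ⟨B² D B, [B,D]⟩ ≥ 0, where [B,D] := B D − D B and ⟨X,Y⟩ := tr(X Yᵀ). -/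
open Matrix

/-!
Write `C = [B, D] = M - Mᵀ` with `M = B D`. Cyclicity of the trace, together with the symmetry of
`B` and the skew-symmetry of `C`, gives `2 ⟨B² D B, C⟩ = 2 tr (M B Cᵀ B) = tr (C B Cᵀ B)`, and the
right-hand side is `tr (P B)` for the positive semidefinite matrices `P = C B Cᵀ` and `B`, hence
nonnegative.
-/

namespace Matrix

variable {n : Type*} [Fintype n]

theorem PosSemidef.trace_mul_mul_transpose_mul_nonneg {B : Matrix n n ℝ} (hB : B.PosSemidef)
    (X : Matrix n n ℝ) : 0 ≤ (X * B * Xᵀ * B).trace := by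
  simpa only [conjTranspose_eq_transpose_of_trivial] using
    (hB.mul_mul_conjTranspose_same X).trace_mul_nonneg hB

section CommRing

variable {R : Type*} [CommRing R] {B C : Matrix n n R}

theorem trace_transpose_mul_mul_transpose_mul (M : Matrix n n R) (hB : Bᵀ = B) (hC : Cᵀ = -C) :
    (Mᵀ * B * Cᵀ * B).trace = -(M * B * Cᵀ * B).trace :=
  calc (Mᵀ * B * Cᵀ * B).trace = (B * C * B * M).trace := by
        rw [← trace_transpose]; simp only [transpose_mul, transpose_transpose, hB, mul_assoc]
    _ = (M * (B * C * B)).trace := trace_mul_comm _ _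
    _ = -(M * B * Cᵀ * B).trace := by simp [hC, mul_assoc]

theorem trace_sub_transpose_mul_mul_transpose_mul (M : Matrix n n R) (hB : Bᵀ = B) :
    ((M - Mᵀ) * B * (M - Mᵀ)ᵀ * B).trace = 2 * (M * B * (M - Mᵀ)ᵀ * B).trace := by
  have hskew : (M - Mᵀ)ᵀ = -(M - Mᵀ) := by rw [transpose_sub, transpose_transpose, neg_sub]
  rw [sub_mul, sub_mul, sub_mul, trace_sub, trace_transpose_mul_mul_transpose_mul M hB hskew]
  ring

end CommRing

end Matrix

/-- For `B` symmetric positive definite and `D` symmetric,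
`⟨B² D B, [B,D]⟩ ≥ 0` where `[B,D] = B D − D B`. -/
theorem inner_sqB_D_B_commutator_nonneg
    (B : Matrix (Fin 3) (Fin 3) ℝ) (hB : B.PosDef)
    (D : Matrix (Fin 3) (Fin 3) ℝ) (hD : Dᵀ = D) :
    0 ≤ ((B ^ 2 * D * B) * (B * D - D * B)ᵀ).trace := by
  have hBt : Bᵀ = B := hB.posSemidef.isHermitian
  have hBD : (B * D)ᵀ = D * B := by rw [transpose_mul, hBt, hD]
  have hcyc : ((B ^ 2 * D * B) * (B * D - D * B)ᵀ).trace
      = (B * D * B * (B * D - D * B)ᵀ * B).trace := by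
    rw [pow_two, trace_mul_comm _ B]
    simp only [mul_assoc]
  have htwice := trace_sub_transpose_mul_mul_transpose_mul (B * D) hBt
  rw [hBD] at htwice
  have hnonneg := hB.posSemidef.trace_mul_mul_transpose_mul_nonneg (B * D - D * B)
  linarith
end

section
/- Positive definiteness of 𝔸°(B) for nonnegative weights: let ν₁, ν₂, ν₃ ≥ 0 be real numbers, B a real symmetric positive definite 3×3 matrix, and define 𝔸°(B).D := D B + B D + (ν₁/2)(B [B,D] − [B,D] B) + (ν₂/2)(B² [B,D] − [B,D] B²) + (ν₃/2)(B² [B,D] B − B [B,D] B²) with [B,D] := B D − D B. Then ⟨𝔸°(B).D, D⟩ > 0 for every nonzero symmetric 3×3 matrix D. -/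
/-!
By cyclicity of the trace, and since the commutator `C = [B, D]` of two symmetric matrices is
skew-symmetric,
`⟨𝔸°(B).D, D⟩ = 2 tr(D B Dᵀ) + (ν₁/2) tr(C Cᵀ) + ν₂ tr(B C Cᵀ) + (ν₃/2) tr(B C B Cᵀ)`.
The last three traces are traces of products of positive semidefinite matrices, hence
nonnegative, and the first is positive because `B` is positive definite and `D ≠ 0`.
-/

open Matrix

namespace Matrix

open scoped MatrixOrder ComplexOrder

variable {m n 𝕜 : Type*} [Fintype m] [Fintype n] [RCLike 𝕜]

theorem PosSemidef.trace_mul_nonneg_s13 {P Q : Matrix n n 𝕜} (hP : P.PosSemidef)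
    (hQ : Q.PosSemidef) : 0 ≤ (P * Q).trace := by
  classical
  obtain ⟨S, rfl⟩ := CStarAlgebra.nonneg_iff_eq_star_mul_self.mp hQ.nonneg
  rw [star_eq_conjTranspose, ← mul_assoc, trace_mul_comm, ← mul_assoc]
  exact (hP.mul_mul_conjTranspose_same S).trace_nonneg

theorem PosDef.trace_mul_mul_conjTranspose_pos_s13 {B : Matrix n n 𝕜} (hB : B.PosDef)
    {X : Matrix m n 𝕜} (hX : X ≠ 0) : 0 < (X * B * Xᴴ).trace := by
  classical
  obtain ⟨T, hT, rfl⟩ :=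
    CStarAlgebra.isStrictlyPositive_iff_eq_star_mul_self.mp hB.isStrictlyPositive
  have hTX : T * Xᴴ ≠ 0 := fun h ↦ hX <| conjTranspose_eq_zero.mp <| by
    simpa [← Matrix.mul_assoc, nonsing_inv_mul T ((isUnit_iff_isUnit_det T).mp hT)] using
      congr(T⁻¹ * $h)
  have h : (X * (star T * T) * Xᴴ).trace = ((T * Xᴴ)ᴴ * (T * Xᴴ)).trace := by
    rw [conjTranspose_mul, conjTranspose_conjTranspose, star_eq_conjTranspose]
    simp only [Matrix.mul_assoc]
  rw [h]
  exact (posSemidef_conjTranspose_mul_self _).trace_nonneg.lt_of_ne'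
    (trace_conjTranspose_mul_self_eq_zero_iff.not.mpr hTX)

end Matrix

theorem trace_Astiff_mul_transpose {B D : Matrix (Fin 3) (Fin 3) ℝ} (hB : Bᵀ = B)
    (hD : Dᵀ = D) (ν₁ ν₂ ν₃ : ℝ) :
    (Astiff B ν₁ ν₂ ν₃ D * Dᵀ).trace = 2 * (D * B * Dᵀ).trace
      + ν₁ / 2 * (⁅B, D⁆ * ⁅B, D⁆ᵀ).trace + ν₂ * (B * (⁅B, D⁆ * ⁅B, D⁆ᵀ)).trace
      + ν₃ / 2 * (B * (⁅B, D⁆ * B * ⁅B, D⁆ᵀ)).trace := by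
  simp only [Astiff, Ring.lie_def, transpose_sub, transpose_mul, hB, hD, pow_two, trace,
    mul_apply, diag_apply, Matrix.sub_apply, Matrix.add_apply, Matrix.smul_apply, smul_eq_mul,
    Fin.sum_univ_three]
  ring

/-- Positive definiteness of `𝔸°(B)` for nonnegative weights
`ν₁, ν₂, ν₃ ≥ 0`: `⟨𝔸°(B).D, D⟩ > 0` for every nonzero symmetric `D`. -/
theorem Astiff_posDef_of_nonneg_weights
    (ν₁ ν₂ ν₃ : ℝ) (hν₁ : 0 ≤ ν₁) (hν₂ : 0 ≤ ν₂) (hν₃ : 0 ≤ ν₃)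
    (B : Matrix (Fin 3) (Fin 3) ℝ) (hB : B.PosDef)
    (D : Matrix (Fin 3) (Fin 3) ℝ) (hD : Dᵀ = D) (hD0 : D ≠ 0) :
    0 < ((Astiff B ν₁ ν₂ ν₃ D) * Dᵀ).trace := by
  have hBt : Bᵀ = B := hB.isHermitian.eq
  rw [trace_Astiff_mul_transpose hBt hD]
  simp only [← conjTranspose_eq_transpose_of_trivial]
  have hDBD := hB.trace_mul_mul_conjTranspose_pos_s13 hD0
  have hCC := (posSemidef_self_mul_conjTranspose ⁅B, D⁆).trace_nonneg
  have hBCC := hB.posSemidef.trace_mul_nonneg_s13 (posSemidef_self_mul_conjTranspose ⁅B, D⁆)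
  have hBCBC := hB.posSemidef.trace_mul_nonneg_s13
    (hB.posSemidef.mul_mul_conjTranspose_same ⁅B, D⁆)
  linarith [mul_nonneg hν₁ hCC, mul_nonneg hν₂ hBCC, mul_nonneg hν₃ hBCBC]
end

section
/- Spectral criterion for positivity of corotational rates with material spins: let λ₁, λ₂, λ₃ > 0, let b := diag(λ₁², λ₂², λ₃²), and let g_{ij} ∈ ℝ for i ≠ j in {1,2,3} satisfy g_{ji} = −g_{ij}. Define the linear map on symmetric 3×3 matrices by 𝔸.D := b D + D b + Σ_{i≠j} g_{ij} (λᵢ² − λⱼ²) Eᵢ D Eⱼ, where Eᵢ is the diagonal matrix projecting onto the i-th coordinate (so (Eᵢ D Eⱼ) has D_{ij} in position (i,j) and zeros elsewhere). Then for every symmetric D, ⟨𝔸.D, D⟩ = 2 Σ_{i=1}^{3} λᵢ² D_{ii}² + Σ_{i≠j} z_{ij} D_{ij}², where z_{ij} := λᵢ² + λⱼ² + g_{ij}(λᵢ² − λⱼ²); moreover ⟨𝔸.D, D⟩ > 0 for every nonzero symmetric D if and only if z_{ij} > 0 for all i ≠ j. -/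
/-!
`𝔸` acts entrywise: `𝔸.D = z ⊙ D` (Hadamard product) for the weight matrix
`z_{ij} = λᵢ² + λⱼ² + g_{ij}(λᵢ² − λⱼ²)`, whose diagonal is `zᵢᵢ = 2λᵢ²` and which is symmetric
because `g` is antisymmetric. Hence `⟨𝔸.D, D⟩ = Σ_{i,j} z_{ij} D_{ij}²`. A weighted sum of squares
with symmetric weights is positive on nonzero symmetric matrices iff every weight is positive,
as the test matrices `Eᵢᵢ` and `E_{ij} + E_{ji}` show.
-/

open Matrix

/-- The linear map `𝔸.D := b D + D b + Σ_{i≠j} g_{ij} (λᵢ² − λⱼ²) Eᵢ D Eⱼ` where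
`b = diag(λ₁², λ₂², λ₃²)` and `Eᵢ` projects onto the `i`-th coordinate. -/
noncomputable def Aspec (lam : Fin 3 → ℝ) (g : Fin 3 → Fin 3 → ℝ)
    (D : Matrix (Fin 3) (Fin 3) ℝ) : Matrix (Fin 3) (Fin 3) ℝ :=
  Matrix.diagonal (fun i => (lam i) ^ 2) * D + D * Matrix.diagonal (fun i => (lam i) ^ 2)
    + ∑ i : Fin 3, ∑ j : Fin 3,
        if i ≠ j then
          (g i j * ((lam i) ^ 2 - (lam j) ^ 2)) •
            (Matrix.single i i (1 : ℝ) * D * Matrix.single j j (1 : ℝ))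
        else 0

theorem Finset.sum_sum_eq_sum_diag_add_sum_offDiag {ι M : Type*} [Fintype ι] [DecidableEq ι]
    [AddCommMonoid M] (f : ι → ι → M) :
    ∑ i, ∑ j, f i j = ∑ i, f i i + ∑ i, ∑ j, if i ≠ j then f i j else 0 := by
  rw [← Finset.sum_add_distrib]
  refine Finset.sum_congr rfl fun i _ => ?_
  rw [← Finset.add_sum_erase _ _ (Finset.mem_univ i), Finset.sum_ite, Finset.sum_const_zero,
    add_zero]
  congr 1
  refine Finset.sum_congr ?_ fun _ _ => rfl
  ext j
  simp [eq_comm]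

namespace Matrix

variable {n : Type*} [Fintype n]

theorem trace_hadamard_mul_transpose {R : Type*} [CommSemiring R] (W D : Matrix n n R) :
    ((W ⊙ D) * Dᵀ).trace = ∑ i, ∑ j, W i j * D i j ^ 2 := by
  simp only [← sum_hadamard_eq, hadamard_apply, sq, mul_assoc]

theorem sum_mul_sq_pos_of_pos {W : Matrix n n ℝ} (hW : ∀ i j, 0 < W i j) {D : Matrix n n ℝ}
    (hD : D ≠ 0) : 0 < ∑ i, ∑ j, W i j * D i j ^ 2 := by
  obtain ⟨a, b, hab⟩ : ∃ a b, D a b ≠ 0 := by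
    by_contra! h
    exact hD (Matrix.ext h)
  have hterm : ∀ i j, 0 ≤ W i j * D i j ^ 2 := fun i j => by have := hW i j; positivity
  refine Finset.sum_pos' (fun i _ => Finset.sum_nonneg fun j _ => hterm i j)
    ⟨a, Finset.mem_univ a, ?_⟩
  exact Finset.sum_pos' (fun j _ => hterm a j)
    ⟨b, Finset.mem_univ b, mul_pos (hW a b) (by positivity)⟩

theorem sum_mul_sq_single_self [DecidableEq n] (W : Matrix n n ℝ) (i : n) :
    ∑ a, ∑ b, W a b * single i i (1 : ℝ) a b ^ 2 = W i i := by
  simp [single_apply, ite_and]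

theorem sum_mul_sq_single_add_single [DecidableEq n] (W : Matrix n n ℝ) {i j : n} (hij : i ≠ j) :
    ∑ a, ∑ b, W a b * (single i j (1 : ℝ) + single j i 1 : Matrix n n ℝ) a b ^ 2
      = W i j + W j i := by
  have hsq : ∀ a b, (single i j (1 : ℝ) + single j i 1 : Matrix n n ℝ) a b ^ 2
      = single i j (1 : ℝ) a b + single j i 1 a b := by
    intro a b
    simp only [Matrix.add_apply, single_apply]
    split_ifs <;> grind
  simp only [hsq, mul_add, Finset.sum_add_distrib]
  simp [single_apply, ite_and]

theorem pos_of_forall_sum_mul_sq_pos {W : Matrix n n ℝ} (hW : Wᵀ = W)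
    (h : ∀ D : Matrix n n ℝ, Dᵀ = D → D ≠ 0 → 0 < ∑ a, ∑ b, W a b * D a b ^ 2) (i j : n) :
    0 < W i j := by
  classical
  rcases eq_or_ne i j with rfl | hij
  · simpa only [sum_mul_sq_single_self] using
      h (single i i 1) (transpose_single i i 1) fun h0 => by
        simpa [single_apply] using congrFun (congrFun h0 i) i
  · have hsymm : (single i j (1 : ℝ) + single j i 1 : Matrix n n ℝ)ᵀ
        = single i j 1 + single j i 1 := by
      rw [transpose_add, transpose_single, transpose_single, add_comm]
    have hne : (single i j (1 : ℝ) + single j i 1 : Matrix n n ℝ) ≠ 0 := fun h0 => by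
      simpa [single_apply, hij] using congrFun (congrFun h0 i) j
    have hpos := h _ hsymm hne
    rw [sum_mul_sq_single_add_single W hij, ← transpose_apply W i j, hW] at hpos
    linarith

theorem forall_sum_mul_sq_pos_iff {W : Matrix n n ℝ} (hW : Wᵀ = W) :
    (∀ D : Matrix n n ℝ, Dᵀ = D → D ≠ 0 → 0 < ∑ i, ∑ j, W i j * D i j ^ 2) ↔
      ∀ i j, 0 < W i j :=
  ⟨pos_of_forall_sum_mul_sq_pos hW, fun hpos _ _ hD => sum_mul_sq_pos_of_pos hpos hD⟩

end Matrix

section CorotWeight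

variable {n : Type*} (lam : n → ℝ) (g : n → n → ℝ)

def corotWeight : Matrix n n ℝ :=
  of fun i j => lam i ^ 2 + lam j ^ 2 + g i j * (lam i ^ 2 - lam j ^ 2)

theorem corotWeight_self (i : n) : corotWeight lam g i i = 2 * lam i ^ 2 := by
  simp only [corotWeight, of_apply, sub_self, mul_zero]
  ring

variable {lam g}

theorem corotWeight_transpose (hg : ∀ i j, i ≠ j → g j i = -g i j) :
    (corotWeight lam g)ᵀ = corotWeight lam g := by
  ext i j
  rcases eq_or_ne i j with rfl | hij
  · rfl
  · simp only [transpose_apply, corotWeight, of_apply, hg i j hij]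
    ring

end CorotWeight

theorem Aspec_eq_hadamard (lam : Fin 3 → ℝ) (g : Fin 3 → Fin 3 → ℝ)
    (D : Matrix (Fin 3) (Fin 3) ℝ) : Aspec lam g D = corotWeight lam g ⊙ D := by
  have hspin : (∑ i : Fin 3, ∑ j : Fin 3, if i ≠ j then
        (g i j * (lam i ^ 2 - lam j ^ 2)) • (single i i (1 : ℝ) * D * single j j 1) else 0)
      = of fun i j => g i j * (lam i ^ 2 - lam j ^ 2) * D i j := by
    conv_rhs => rw [matrix_eq_sum_single (of _)]
    refine Finset.sum_congr rfl fun i _ => Finset.sum_congr rfl fun j _ => ?_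
    -- the excluded diagonal terms vanish anyway, since `λᵢ² − λᵢ² = 0`
    split_ifs with hij
    · simp [smul_single]
    · simp [not_not.mp hij]
  ext a b
  simp only [Aspec, hspin, Matrix.add_apply, diagonal_mul, mul_diagonal, of_apply,
    hadamard_apply, corotWeight]
  ring

/-- Spectral criterion for positivity of corotational rates with
material spins: the quadratic form of `𝔸` is
`2 Σᵢ λᵢ² Dᵢᵢ² + Σ_{i≠j} z_{ij} Dᵢⱼ²` with `z_{ij} = λᵢ² + λⱼ² + g_{ij}(λᵢ² − λⱼ²)`,
and `𝔸` is positive definite on symmetric matrices iff `z_{ij} > 0` for all `i ≠ j`. -/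
theorem Aspec_quadratic_form_and_posDef_iff
    (lam : Fin 3 → ℝ) (hlam : ∀ i, 0 < lam i)
    (g : Fin 3 → Fin 3 → ℝ) (hg : ∀ i j, i ≠ j → g j i = -g i j) :
    (∀ D : Matrix (Fin 3) (Fin 3) ℝ, Dᵀ = D →
        ((Aspec lam g D) * Dᵀ).trace
          = 2 * ∑ i : Fin 3, (lam i) ^ 2 * (D i i) ^ 2
            + ∑ i : Fin 3, ∑ j : Fin 3,
                if i ≠ j then
                  ((lam i) ^ 2 + (lam j) ^ 2 + g i j * ((lam i) ^ 2 - (lam j) ^ 2))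
                    * (D i j) ^ 2
                else 0)
    ∧ ((∀ D : Matrix (Fin 3) (Fin 3) ℝ, Dᵀ = D → D ≠ 0 →
          0 < ((Aspec lam g D) * Dᵀ).trace)
        ↔ ∀ i j, i ≠ j →
            0 < (lam i) ^ 2 + (lam j) ^ 2 + g i j * ((lam i) ^ 2 - (lam j) ^ 2)) := by
  have hform : ∀ D, ((Aspec lam g D) * Dᵀ).trace
      = ∑ i, ∑ j, corotWeight lam g i j * D i j ^ 2 := fun D => by
    rw [Aspec_eq_hadamard, trace_hadamard_mul_transpose]
  simp only [hform]
  refine ⟨fun D _ => ?_, ?_⟩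
  · rw [Finset.sum_sum_eq_sum_diag_add_sum_offDiag]
    simp only [corotWeight_self, Finset.mul_sum, mul_assoc]
    rfl
  · rw [forall_sum_mul_sq_pos_iff (corotWeight_transpose hg)]
    refine ⟨fun h i j _ => h i j, fun h i j => ?_⟩
    rcases eq_or_ne i j with rfl | hij
    · rw [corotWeight_self]
      have := hlam i
      positivity
    · exact h i j hij
end

section
/- Non-invertibility of the Gurtin-Spear rate: let λ₁, λ₂, λ₃ > 0 be pairwise distinct, let b := diag(λ₁², λ₂², λ₃²), and set g_{ij} := (λᵢ² + λⱼ²)/(λⱼ² − λᵢ²) for i ≠ j. Define 𝔸.D := b D + D b + Σ_{i≠j} g_{ij} (λᵢ² − λⱼ²) Eᵢ D Eⱼ on symmetric 3×3 matrices, where Eᵢ is the diagonal matrix projecting onto the i-th coordinate. Then the nonzero symmetric matrix D with D_{12} = D_{21} = 1 and all other entries zero satisfies 𝔸.D = 0; in particular, the linear map D ↦ 𝔸.D on symmetric 3×3 matrices is not injective. -/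
open Matrix

noncomputable def gurtinSpearCoeff (lam : Fin 3 → ℝ) (i j : Fin 3) : ℝ :=
  (lam i ^ 2 + lam j ^ 2) / (lam j ^ 2 - lam i ^ 2)

theorem Aspec_apply (lam : Fin 3 → ℝ) (g : Fin 3 → Fin 3 → ℝ)
    (D : Matrix (Fin 3) (Fin 3) ℝ) (i j : Fin 3) :
    Aspec lam g D i j =
      (lam i ^ 2 + lam j ^ 2 + if i ≠ j then g i j * (lam i ^ 2 - lam j ^ 2) else 0) * D i j := by
  have hsum : (∑ a : Fin 3, ∑ b : Fin 3, if a ≠ b then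
      (g a b * (lam a ^ 2 - lam b ^ 2)) • (single a a (1 : ℝ) * D * single b b (1 : ℝ))
      else 0) i j = if i ≠ j then g i j * (lam i ^ 2 - lam j ^ 2) * D i j else 0 := by
    simp only [Matrix.sum_apply, apply_ite (fun M : Matrix (Fin 3) (Fin 3) ℝ => M i j),
      single_mul_mul_single, Matrix.smul_apply, Matrix.zero_apply, smul_eq_mul, one_mul, mul_one]
    rw [Fintype.sum_eq_single i, Fintype.sum_eq_single j] <;> intros <;> simp_all
  simp only [Aspec, Matrix.add_apply, diagonal_mul, mul_diagonal, hsum]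
  split_ifs <;> ring

theorem Aspec_zero (lam : Fin 3 → ℝ) (g : Fin 3 → Fin 3 → ℝ) : Aspec lam g 0 = 0 := by
  ext i j
  simp [Aspec_apply]

theorem Aspec_gurtinSpearCoeff_apply_of_sq_ne {lam : Fin 3 → ℝ} {i j : Fin 3}
    (h : lam i ^ 2 ≠ lam j ^ 2) (D : Matrix (Fin 3) (Fin 3) ℝ) :
    Aspec lam (gurtinSpearCoeff lam) D i j = 0 := by
  have hij : i ≠ j := fun hij => h (hij ▸ rfl)
  have hsub : lam j ^ 2 - lam i ^ 2 ≠ 0 := sub_ne_zero.2 h.symm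
  rw [Aspec_apply, if_pos hij, gurtinSpearCoeff]
  field_simp
  ring

theorem Aspec_gurtinSpearCoeff_eq_zero {lam : Fin 3 → ℝ} {D : Matrix (Fin 3) (Fin 3) ℝ}
    (hD : ∀ i j, D i j ≠ 0 → lam i ^ 2 ≠ lam j ^ 2) :
    Aspec lam (gurtinSpearCoeff lam) D = 0 := by
  ext i j
  by_cases hDij : D i j = 0
  · rw [Aspec_apply, hDij, mul_zero, Matrix.zero_apply]
  · exact Aspec_gurtinSpearCoeff_apply_of_sq_ne (hD i j hDij) D

section SingleAddSingle

variable {n α : Type*} [DecidableEq n]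

theorem single_add_single_apply_ne_zero [AddZeroClass α] {i j a b : n} {c : α}
    (h : (single i j c + single j i c) a b ≠ 0) :
    (a = i ∧ b = j) ∨ (a = j ∧ b = i) := by
  by_contra! hab
  apply h
  rw [Matrix.add_apply, single_apply_of_ne, single_apply_of_ne, add_zero] <;> grind

theorem single_add_single_ne_zero [AddZeroClass α] {i j : n} (hij : i ≠ j) {c : α} (hc : c ≠ 0) :
    single i j c + single j i c ≠ 0 := fun h =>
  hc (by simpa [single_apply_of_row_ne hij.symm] using congrFun (congrFun h i) j)

theorem transpose_single_add_single [AddCommMonoid α] (i j : n) (c : α) :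
    (single i j c + single j i c)ᵀ = single i j c + single j i c := by
  rw [transpose_add, transpose_single, transpose_single, add_comm]

end SingleAddSingle

theorem Aspec_gurtinSpearCoeff_single_add_single {lam : Fin 3 → ℝ} {i j : Fin 3}
    (h : lam i ^ 2 ≠ lam j ^ 2) :
    Aspec lam (gurtinSpearCoeff lam) (single i j 1 + single j i 1) = 0 := by
  refine Aspec_gurtinSpearCoeff_eq_zero fun a b hab => ?_
  obtain ⟨rfl, rfl⟩ | ⟨rfl, rfl⟩ := single_add_single_apply_ne_zero hab
  exacts [h, h.symm]

theorem gurtin_spear_not_injective_general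
    (l₁ l₂ l₃ : ℝ) (h₁ : 0 < l₁) (h₂ : 0 < l₂)
    (h₁₂ : l₁ ≠ l₂) :
    (Matrix.single (0 : Fin 3) (1 : Fin 3) (1 : ℝ)
        + Matrix.single (1 : Fin 3) (0 : Fin 3) (1 : ℝ)) ≠ 0
    ∧ (Matrix.single (0 : Fin 3) (1 : Fin 3) (1 : ℝ)
        + Matrix.single (1 : Fin 3) (0 : Fin 3) (1 : ℝ))ᵀ
      = Matrix.single (0 : Fin 3) (1 : Fin 3) (1 : ℝ)
        + Matrix.single (1 : Fin 3) (0 : Fin 3) (1 : ℝ)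
    ∧ Aspec ![l₁, l₂, l₃]
        (fun i j => ((![l₁, l₂, l₃] i) ^ 2 + (![l₁, l₂, l₃] j) ^ 2)
          / ((![l₁, l₂, l₃] j) ^ 2 - (![l₁, l₂, l₃] i) ^ 2))
        (Matrix.single (0 : Fin 3) (1 : Fin 3) (1 : ℝ)
          + Matrix.single (1 : Fin 3) (0 : Fin 3) (1 : ℝ)) = 0
    ∧ ¬ Set.InjOn
        (Aspec ![l₁, l₂, l₃]
          (fun i j => ((![l₁, l₂, l₃] i) ^ 2 + (![l₁, l₂, l₃] j) ^ 2)
            / ((![l₁, l₂, l₃] j) ^ 2 - (![l₁, l₂, l₃] i) ^ 2)))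
        {D : Matrix (Fin 3) (Fin 3) ℝ | Dᵀ = D} := by
  have hsq : l₁ ^ 2 ≠ l₂ ^ 2 := fun h => h₁₂ ((sq_eq_sq₀ h₁.le h₂.le).1 h)
  have hker : Aspec ![l₁, l₂, l₃] (gurtinSpearCoeff ![l₁, l₂, l₃])
      (single 0 1 1 + single 1 0 1) = 0 :=
    Aspec_gurtinSpearCoeff_single_add_single hsq
  have hne : single (0 : Fin 3) (1 : Fin 3) (1 : ℝ) + single 1 0 1 ≠ 0 :=
    single_add_single_ne_zero zero_ne_one one_ne_zero
  have hsymm := transpose_single_add_single (0 : Fin 3) 1 (1 : ℝ)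
  refine ⟨hne, hsymm, hker, fun hinj => ?_⟩
  exact hne (hinj hsymm transpose_zero (hker.trans (Aspec_zero _ _).symm))

/-- Non-invertibility of the Gurtin-Spear rate: with pairwise distinct
`λ₁, λ₂, λ₃ > 0` and `g_{ij} = (λᵢ² + λⱼ²)/(λⱼ² − λᵢ²)`, the nonzero symmetric matrix `D`
with `D₁₂ = D₂₁ = 1` and all other entries zero lies in the kernel of `𝔸`; in particular
`𝔸` is not injective on symmetric matrices. -/
theorem gurtin_spear_not_injective
    (l₁ l₂ l₃ : ℝ) (h₁ : 0 < l₁) (h₂ : 0 < l₂) (h₃ : 0 < l₃)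
    (h₁₂ : l₁ ≠ l₂) (h₁₃ : l₁ ≠ l₃) (h₂₃ : l₂ ≠ l₃) :
    (Matrix.single (0 : Fin 3) (1 : Fin 3) (1 : ℝ)
        + Matrix.single (1 : Fin 3) (0 : Fin 3) (1 : ℝ)) ≠ 0
    ∧ (Matrix.single (0 : Fin 3) (1 : Fin 3) (1 : ℝ)
        + Matrix.single (1 : Fin 3) (0 : Fin 3) (1 : ℝ))ᵀ
      = Matrix.single (0 : Fin 3) (1 : Fin 3) (1 : ℝ)
        + Matrix.single (1 : Fin 3) (0 : Fin 3) (1 : ℝ)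
    ∧ Aspec ![l₁, l₂, l₃]
        (fun i j => ((![l₁, l₂, l₃] i) ^ 2 + (![l₁, l₂, l₃] j) ^ 2)
          / ((![l₁, l₂, l₃] j) ^ 2 - (![l₁, l₂, l₃] i) ^ 2))
        (Matrix.single (0 : Fin 3) (1 : Fin 3) (1 : ℝ)
          + Matrix.single (1 : Fin 3) (0 : Fin 3) (1 : ℝ)) = 0
    ∧ ¬ Set.InjOn
        (Aspec ![l₁, l₂, l₃]
          (fun i j => ((![l₁, l₂, l₃] i) ^ 2 + (![l₁, l₂, l₃] j) ^ 2)
            / ((![l₁, l₂, l₃] j) ^ 2 - (![l₁, l₂, l₃] i) ^ 2)))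
        {D : Matrix (Fin 3) (Fin 3) ℝ | Dᵀ = D} :=
  gurtin_spear_not_injective_general l₁ l₂ l₃ h₁ h₂ h₁₂
end
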